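/- arXiv:1010.1359 — 8 statements merged into one kernel-verified Lean document; each statement's English description precedes it below -/
import Mathlib

section
/- Let κ be an infinite cardinal, X a set of cardinality κ⁺, and ⟨·⟩ a hull operator on X with finite supports and the MacLane–Steinitz exchange property. If |⟨F⟩ \ ⟨∅⟩| ≤ κ for each finite F ⊆ X, then X \ ⟨∅⟩ can be covered by κ many independent subsets. -/
/-!
Well-order `X` in type `κ⁺`, so that every initial segment has size at most `κ`, and close each
initial segment under `A ↦ A ∪ (⟨A⟩ \ ⟨∅⟩)`; finite supports and the bound on `⟨F⟩ \ ⟨∅⟩` keep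
these closures of size `κ`. The rank `σ x` of `x` is the first stage whose closure contains `x`,
so every sublevel set of `σ` is closed and every level has at most `κ` elements. Colour each level
injectively by `κ`. A colour class `C` is independent: if `a ∈ ⟨F⟩` with `F ⊆ C \ {a}` finite,
let `b` be the element of `F` of largest rank. If `σ b < σ a`, closedness of the sublevel set
of `σ b` puts `a` there, which is absurd; if `σ a < σ b`, then by induction `a ∉ ⟨F \ {b}⟩`, and
exchange gives `b ∈ ⟨(F \ {b}) ∪ {a}⟩`, a set of rank below `σ b`, which is absurd again.
-/

open Cardinal Set

universe u

namespace Cardinal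

theorem mk_iUnion_le_of_le {α : Type u} {ι : Type*} {κ : Cardinal.{u}} (hκ : ℵ₀ ≤ κ)
    {f : ι → Set α} (hι : lift.{u} #ι ≤ lift κ) (hf : ∀ i, #(f i) ≤ κ) :
    #(⋃ i, f i) ≤ κ := by
  rw [← lift_le]
  calc lift #(⋃ i, f i) ≤ lift #ι * ⨆ i, lift #(f i) := mk_iUnion_le_lift f
    _ ≤ lift κ * lift κ := by
        gcongr
        exact ciSup_le' fun i => lift_le.2 (hf i)
    _ = lift κ := mul_eq_self (by simpa using hκ)

theorem mk_finset_le {α : Type u} {κ : Cardinal.{u}} (hκ : ℵ₀ ≤ κ) (hα : #α ≤ κ) :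
    #(Finset α) ≤ κ := by
  classical
  exact (mk_le_of_surjective List.toFinset_surjective).trans <|
    (mk_list_le_max α).trans (max_le hκ hα)

end Cardinal

section Hull

variable {X : Type u} (h : Set X → Set X)

def HasFiniteSupports : Prop :=
  ∀ (A : Set X) (a : X), a ∈ h A → ∃ F : Finset X, ↑F ⊆ A ∧ a ∈ h ↑F

def HasExchange : Prop :=
  ∀ (A : Set X) (x y : X), x ∉ h A → y ∉ h A → (x ∈ h (A ∪ {y}) ↔ y ∈ h (A ∪ {x}))

def IsIndependent (C : Set X) : Prop :=
  ∀ a ∈ C, a ∉ h (C \ {a})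

/-- The least superset of `A` containing every element of its hull outside `h ∅`. -/
def hullClosure (A : Set X) : Set X :=
  ⋃ n : ℕ, (fun S => S ∪ (h S \ h ∅))^[n] A

variable {h}

theorem subset_hullClosure (A : Set X) : A ⊆ hullClosure h A :=
  subset_iUnion (fun n => (fun S => S ∪ (h S \ h ∅))^[n] A) 0

theorem hullClosure_mono (hmono : Monotone h) : Monotone (hullClosure h) := by
  have hstep : Monotone fun S => S ∪ (h S \ h ∅) := fun _ _ hST =>
    union_subset_union hST (sdiff_subset_sdiff_left (hmono hST))
  exact fun _ _ hAB => iUnion_mono fun n => hstep.iterate n hAB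

theorem hull_hullClosure_diff_subset (hmono : Monotone h) (hfin : HasFiniteSupports h)
    (A : Set X) : h (hullClosure h A) \ h ∅ ⊆ hullClosure h A := by
  rintro x ⟨hx, hx0⟩
  obtain ⟨F, hFA, hxF⟩ := hfin _ x hx
  have hchain : Monotone fun n => (fun S => S ∪ (h S \ h ∅))^[n] A :=
    monotone_nat_of_le_succ fun n => by
      simpa only [Function.iterate_succ_apply'] using subset_union_left
  obtain ⟨n, hn⟩ := hchain.directed_le.exists_mem_subset_of_finset_subset_biUnion hFA
  refine mem_iUnion.2 ⟨n + 1, ?_⟩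
  rw [Function.iterate_succ_apply']
  exact Or.inr ⟨hmono hn hxF, hx0⟩

variable {κ : Cardinal.{u}}

theorem mk_hull_diff_le (hκ : ℵ₀ ≤ κ) (hfin : HasFiniteSupports h)
    (hsmall : ∀ F : Finset X, #(h ↑F \ h ∅ : Set X) ≤ κ) {A : Set X} (hA : #A ≤ κ) :
    #(h A \ h ∅ : Set X) ≤ κ := by
  classical
  have hcover : h A \ h ∅ ⊆
      ⋃ F : Finset A, h ↑(F.map (Function.Embedding.subtype (· ∈ A))) \ h ∅ := by
    rintro x ⟨hx, hx0⟩
    obtain ⟨F, hFA, hxF⟩ := hfin A x hx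
    refine mem_iUnion.2 ⟨F.subtype (· ∈ A), ?_, hx0⟩
    rwa [Finset.subtype_map_of_mem fun _ hy => hFA hy]
  exact (mk_le_mk_of_subset hcover).trans <|
    mk_iUnion_le_of_le hκ (by simpa using mk_finset_le hκ hA) fun F => hsmall _

theorem mk_hullClosure_le (hκ : ℵ₀ ≤ κ) (hfin : HasFiniteSupports h)
    (hsmall : ∀ F : Finset X, #(h ↑F \ h ∅ : Set X) ≤ κ) {A : Set X} (hA : #A ≤ κ) :
    #(hullClosure h A) ≤ κ := by
  refine mk_iUnion_le_of_le hκ (by simpa using hκ) fun n => ?_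
  induction n with
  | zero => exact hA
  | succ n ih =>
    rw [Function.iterate_succ_apply']
    exact (mk_union_le _ _).trans <|
      (add_le_add ih (mk_hull_diff_le hκ hfin hsmall ih)).trans (add_eq_self hκ).le

end Hull

section Rank

variable {X : Type*} {T : Type*} [LinearOrder T]

def HasClosedSublevels (h : Set X → Set X) (σ : X → T) : Prop :=
  ∀ t, h {x | σ x ≤ t} \ h ∅ ⊆ {x | σ x ≤ t}

variable {h : Set X → Set X}

theorem notMem_hull_finset_of_injOn (hmono : Monotone h) (hexch : HasExchange h) {σ : X → T}
    (hσ : HasClosedSublevels h σ) {C : Set X} (hC : ∀ x ∈ C, x ∉ h ∅)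
    (hinj : InjOn σ C) {a : X} (ha : a ∈ C) (F : Finset X) :
    ↑F ⊆ C → a ∉ F → a ∉ h ↑F := by
  classical
  induction F using Finset.induction_on_max_value σ with
  | empty => simpa using hC a ha
  | insert b G hbG hmax ih =>
    intro hsub haF haH
    rw [Finset.coe_insert, insert_subset_iff] at hsub
    obtain ⟨hbC, hGC⟩ := hsub
    obtain ⟨hab, haG⟩ : a ≠ b ∧ a ∉ G := by simpa using haF
    rcases (show σ a ≠ σ b from fun e => hab (hinj ha hbC e)).lt_or_gt with hlt | hgt
    · have hlt_b : ∀ g ∈ insert a G, σ g < σ b := by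
        simp only [Finset.mem_insert, forall_eq_or_imp]
        exact ⟨hlt, fun g hg => (hmax g hg).lt_of_ne
          fun e => (ne_of_mem_of_not_mem hg hbG) (hinj (hGC hg) hbC e)⟩
      set t := (insert a G).sup' (Finset.insert_nonempty a G) σ
      have ht : t < σ b := (Finset.sup'_lt_iff _).2 hlt_b
      have hGa : ↑G ∪ {a} ⊆ {x | σ x ≤ t} := by
        rw [union_singleton, ← Finset.coe_insert]
        exact fun g hg => Finset.le_sup' σ hg
      have hb_notMem : ∀ S ⊆ {x | σ x ≤ t}, b ∉ h S := fun S hS hb =>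
        ht.not_ge (hσ t ⟨hmono hS hb, hC b hbC⟩)
      have hba : b ∈ h (↑G ∪ {a}) :=
        (hexch _ a b (ih hGC haG) (hb_notMem _ (subset_union_left.trans hGa))).1
          (by rwa [union_singleton, ← Finset.coe_insert])
      exact hb_notMem _ hGa hba
    · have hle : insert b ↑G ⊆ {x | σ x ≤ σ b} :=
        insert_subset le_rfl fun g hg => hmax g hg
      rw [Finset.coe_insert] at haH
      exact hgt.not_ge (hσ (σ b) ⟨hmono hle haH, hC a ha⟩)

theorem isIndependent_of_injOn (hmono : Monotone h) (hfin : HasFiniteSupports h)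
    (hexch : HasExchange h) {σ : X → T} (hσ : HasClosedSublevels h σ)
    {C : Set X} (hC : ∀ x ∈ C, x ∉ h ∅) (hinj : InjOn σ C) : IsIndependent h C := by
  intro a ha haH
  obtain ⟨F, hF, haF⟩ := hfin _ a haH
  exact notMem_hull_finset_of_injOn hmono hexch hσ hC hinj ha F (hF.trans sdiff_subset)
    (fun haF' => (hF haF').2 rfl) haF

theorem exists_rank_le_iff [WellFoundedLT T] {W : T → Set X} (hW : Monotone W)
    (hcov : ∀ x, ∃ t, x ∈ W t) : ∃ σ : X → T, ∀ x t, σ x ≤ t ↔ x ∈ W t := by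
  refine ⟨fun x => wellFounded_lt.min {t | x ∈ W t} (hcov x),
    fun x t => ⟨fun hle => ?_, fun hx => ?_⟩⟩
  · exact hW hle (wellFounded_lt.min_mem {t | x ∈ W t} (hcov x))
  · exact not_lt.1 (wellFounded_lt.not_lt_min {t | x ∈ W t} hx)

end Rank

theorem exists_wellOrder_mk_preimage_Iic_le {X : Type u} {κ : Cardinal.{u}} (hκ : ℵ₀ ≤ κ)
    (hX : #X = Order.succ κ) :
    ∃ (T : Type u) (_ : LinearOrder T) (_ : WellFoundedLT T) (ρ : X → T),
      ∀ t, #(ρ ⁻¹' Iic t) ≤ κ := by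
  obtain ⟨e⟩ : Nonempty (X ≃ (Order.succ κ).ord.ToType) :=
    Cardinal.eq.mp (by simpa using hX)
  refine ⟨_, inferInstance, inferInstance, e, fun t => ?_⟩
  have hIio : #(Iio t) ≤ κ := Order.lt_succ_iff.1 (by simpa using mk_Iio_lt t (by simp))
  rw [mk_preimage_of_injective_of_subset_range _ _ e.injective (by simp), ← Iio_insert]
  exact mk_insert_le.trans <|
    (add_le_add hIio (one_le_aleph0.trans hκ)).trans (add_eq_self hκ).le

theorem exists_rank_of_mk_eq_succ {X : Type u} {h : Set X → Set X} {κ : Cardinal.{u}}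
    (hκ : ℵ₀ ≤ κ) (hX : #X = Order.succ κ) (hmono : Monotone h) (hfin : HasFiniteSupports h)
    (hsmall : ∀ F : Finset X, #(h ↑F \ h ∅ : Set X) ≤ κ) :
    ∃ (T : Type u) (_ : LinearOrder T) (σ : X → T),
      HasClosedSublevels h σ ∧ ∀ t, #(σ ⁻¹' {t}) ≤ κ := by
  obtain ⟨T, _, _, ρ, hρ⟩ := exists_wellOrder_mk_preimage_Iic_le hκ hX
  set W : T → Set X := fun t => hullClosure h (ρ ⁻¹' Iic t)
  have hW : Monotone W := fun _ _ hst =>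
    hullClosure_mono hmono (preimage_mono (Iic_subset_Iic.2 hst))
  obtain ⟨σ, hσ⟩ := exists_rank_le_iff hW fun x => ⟨ρ x, subset_hullClosure _ le_rfl⟩
  have hsub : ∀ t, {x | σ x ≤ t} = W t := fun t => ext fun x => hσ x t
  refine ⟨T, inferInstance, σ, fun t => ?_, fun t => ?_⟩
  · rw [hsub]
    exact hull_hullClosure_diff_subset hmono hfin _
  · refine (mk_le_mk_of_subset fun x (hx : σ x = t) => ?_).trans
      (mk_hullClosure_le hκ hfin hsmall (hρ t))
    exact (hσ x t).1 hx.le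

theorem exists_injective_prod_mk {X ι : Type u} {T : Type*} (f : X → T)
    (hf : ∀ t, #(f ⁻¹' {t}) ≤ #ι) : ∃ g : X → ι, Function.Injective fun x => (f x, g x) := by
  have e := fun t => ((le_def _ _).1 (hf t)).some
  let E : X ↪ Σ _ : T, ι :=
    (Equiv.sigmaFiberEquiv f).symm.toEmbedding.trans (Function.Embedding.sigmaMap (.refl T) e)
  exact ⟨fun x => (E x).2, fun x y hxy => E.injective ((Equiv.sigmaEquivProd T ι).injective hxy)⟩

open Cardinal in
theorem stmt3_general {X : Type u} (h : Set X → Set X) (κ : Cardinal.{u})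
    (hκ : ℵ₀ ≤ κ) (hX : #X = Order.succ κ)
    (hmono : ∀ A B : Set X, A ⊆ B → h A ⊆ h B)
    (hfin : ∀ (A : Set X) (a : X), a ∈ h A → ∃ F : Finset X, ↑F ⊆ A ∧ a ∈ h ↑F)
    (hexch : ∀ (A : Set X) (x y : X), x ∉ h A → y ∉ h A →
      (x ∈ h (A ∪ {y}) ↔ y ∈ h (A ∪ {x})))
    (hsmall : ∀ F : Finset X, #(h ↑F \ h ∅ : Set X) ≤ κ) :
    ∃ c : κ.out → Set X, (∀ i, ∀ a ∈ c i, a ∉ h (c i \ {a})) ∧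
      Set.univ \ h ∅ ⊆ ⋃ i, c i := by
  have hmono' : Monotone h := fun A B => hmono A B
  obtain ⟨T, _, σ, hσ, hσ_fiber⟩ := exists_rank_of_mk_eq_succ hκ hX hmono' hfin hsmall
  obtain ⟨g, hg⟩ := exists_injective_prod_mk σ (ι := κ.out) (by simpa using hσ_fiber)
  refine ⟨fun i => {x | x ∉ h ∅ ∧ g x = i}, fun i => ?_, ?_⟩
  · exact isIndependent_of_injOn hmono' hfin hexch hσ (fun x hx => hx.1)
      fun x hx y hy hxy => hg (Prod.ext hxy (hx.2.trans hy.2.symm))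
  · rintro x ⟨-, hx⟩
    exact mem_iUnion.2 ⟨g x, hx, rfl⟩

open Cardinal in
theorem stmt3 {X : Type u} (h : Set X → Set X) (κ : Cardinal.{u})
    (hκ : ℵ₀ ≤ κ) (hX : #X = Order.succ κ)
    (hext : ∀ A : Set X, A ⊆ h A)
    (hmono : ∀ A B : Set X, A ⊆ B → h A ⊆ h B)
    (hfin : ∀ (A : Set X) (a : X), a ∈ h A → ∃ F : Finset X, ↑F ⊆ A ∧ a ∈ h ↑F)
    (hexch : ∀ (A : Set X) (x y : X), x ∉ h A → y ∉ h A →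
      (x ∈ h (A ∪ {y}) ↔ y ∈ h (A ∪ {x})))
    (hsmall : ∀ F : Finset X, #(h ↑F \ h ∅ : Set X) ≤ κ) :
    ∃ c : κ.out → Set X, (∀ i, ∀ a ∈ c i, a ∉ h (c i \ {a})) ∧
      Set.univ \ h ∅ ⊆ ⋃ i, c i :=
  stmt3_general h κ hκ hX hmono hfin hexch hsmall
end

section
/- Let κ be an infinite cardinal, F a field with |F| ≤ κ, and X a vector space over F with dim X = κ⁺. Then X \ {0} can be partitioned into κ many linearly independent subsets. -/
/-!
Well-order a basis `(b i)` of `X` in order type `κ⁺` and send a nonzero vector `v` to the largest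
index `top v` in its support. A fibre of `top` over `i` lies in the span of the `b j` with `j ≤ i`,
a space of size at most `κ` because `|F| ≤ κ` and every proper initial segment of `κ⁺` has size at
most `κ`. Hence there is a colouring of `X \ {0}` by `κ` colours that is injective on every fibre
of `top`. Within one colour the top indices are distinct, and such vectors are linearly independent
since each lies outside the span of those with smaller top index.
-/

universe u

open Cardinal Set

theorem Cardinal.mk_finsupp_le_of_le {α β : Type u} [Zero β] [Nontrivial β] {κ : Cardinal.{u}}
    (hκ : ℵ₀ ≤ κ) (hα : #α ≤ κ) (hβ : #β ≤ κ) : #(α →₀ β) ≤ κ := by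
  cases fintypeOrInfinite α
  · rw [mk_finsupp_of_fintype]
    exact (pow_le_pow_left₀ bot_le hβ _).trans (power_nat_le hκ)
  · rw [mk_finsupp_of_infinite]
    exact max_le hα hβ

theorem exists_injective_prod_of_mk_fiber_le {α β γ : Type u} (f : α → β)
    (h : ∀ y, #(f ⁻¹' {y}) ≤ #γ) : ∃ g : α → γ, Function.Injective fun a ↦ (f a, g a) := by
  have e : ∀ y, f ⁻¹' {y} ↪ γ := fun y ↦ ((le_def _ _).1 (h y)).some
  refine ⟨fun a ↦ e (f a) ⟨a, rfl⟩, fun a a' haa' ↦ ?_⟩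
  obtain ⟨hf, hg⟩ := Prod.mk.inj haa'
  have e_congr : ∀ {y y'} (hy : y = y') (x : α) hx hx', e y ⟨x, hx⟩ = e y' ⟨x, hx'⟩ := by
    rintro y _ rfl x _ _
    rfl
  exact congrArg Subtype.val ((e (f a)).injective (hg.trans (e_congr hf.symm a' rfl hf.symm)))

namespace Module.Basis

variable {ι R M : Type*} [LinearOrder ι]

section Semiring

variable [Semiring R] [AddCommMonoid M] [Module R M] (b : Basis ι R M)

/-- `b.topIndex v` is `⊥` exactly when `v = 0`. -/
noncomputable def topIndex (v : M) : WithBot ι :=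
  (b.repr v).support.max

variable {b}

theorem exists_topIndex_eq_coe {v : M} (hv : v ≠ 0) : ∃ i : ι, b.topIndex v = i :=
  Finset.max_of_nonempty (Finsupp.support_nonempty_iff.2 (by simpa using hv))

theorem mem_span_image_of_topIndex_le {v : M} {w : WithBot ι} (h : b.topIndex v ≤ w) :
    v ∈ Submodule.span R (b '' {i | (i : WithBot ι) ≤ w}) :=
  b.mem_span_image.2 fun _ hi ↦ (Finset.le_max hi).trans h

theorem mem_span_image_Iio_of_topIndex_lt {v : M} {i : ι} (h : b.topIndex v < i) :
    v ∈ Submodule.span R (b '' Iio i) :=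
  b.mem_span_image.2 fun _ hj ↦ WithBot.coe_lt_coe.1 ((Finset.le_max hj).trans_lt h)

end Semiring

section DivisionRing

variable [DivisionRing R] [AddCommGroup M] [Module R M] {b : Basis ι R M}

theorem notMem_span_of_topIndex_lt {s : Set M} {v : M} (hv : v ≠ 0)
    (hs : ∀ w ∈ s, b.topIndex w < b.topIndex v) : v ∉ Submodule.span R s := by
  obtain ⟨i, hi⟩ := exists_topIndex_eq_coe (b := b) hv
  have hspan : Submodule.span R s ≤ Submodule.span R (b '' Iio i) :=
    Submodule.span_le.2 fun w hw ↦ mem_span_image_Iio_of_topIndex_lt (hi ▸ hs w hw)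
  intro hmem
  have hsupp : i ∈ (b.repr v).support := Finset.mem_of_max hi
  exact lt_irrefl i (b.mem_span_image.1 (hspan hmem) hsupp)

theorem linearIndepOn_of_injOn_topIndex {s : Set M} (h0 : (0 : M) ∉ s)
    (hinj : InjOn b.topIndex s) : LinearIndepOn R id s := by
  classical
  refine linearIndepOn_iff_linearIndepOn_finset.2 fun t hts ↦ ?_
  induction t using Finset.induction_on_max_value b.topIndex with
  | empty => simp
  | insert a t hat hmax ih =>
    rw [Finset.coe_insert] at hts ⊢
    have has : a ∈ s := hts (mem_insert a _)
    refine (linearIndepOn_id_insert (by exact_mod_cast hat)).2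
      ⟨ih ((subset_insert a _).trans hts), notMem_span_of_topIndex_lt (ne_of_mem_of_not_mem has h0)
        fun w hw ↦ (hmax w hw).lt_of_ne fun heq ↦ ?_⟩
    exact hat (hinj (hts (mem_insert_of_mem a hw)) has heq ▸ hw)

end DivisionRing

section Cardinality

variable {ι R M : Type u} [Semiring R] [AddCommMonoid M] [Module R M] (b : Basis ι R M)

theorem mk_span_image_le (s : Set ι) : #(Submodule.span R (b '' s)) ≤ #(s →₀ R) := by
  refine mk_le_of_injective (f := fun v ↦ Finsupp.supportedEquivFinsupp s
    ⟨b.repr v, (Finsupp.mem_supported R _).2 (b.mem_span_image.1 v.2)⟩) fun v w hvw ↦ ?_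
  have := (Finsupp.supportedEquivFinsupp s).injective hvw
  exact Subtype.ext (b.repr.injective (congrArg Subtype.val this))

theorem mk_topIndex_fiber_le [LinearOrder ι] [Nontrivial R] {κ : Cardinal.{u}} (hκ : ℵ₀ ≤ κ) (hR : #R ≤ κ)
    (hι : ∀ i : ι, #(Iic i) ≤ κ) (w : WithBot ι) : #(b.topIndex ⁻¹' {w}) ≤ κ := by
  have hw : #{i : ι | (i : WithBot ι) ≤ w} ≤ κ := by
    induction w with
    | bot => simp
    | coe i =>
      simp only [WithBot.coe_le_coe]
      exact hι i
  calc #(b.topIndex ⁻¹' {w})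
      ≤ #(Submodule.span R (b '' {i : ι | (i : WithBot ι) ≤ w})) :=
        mk_le_mk_of_subset fun v hv ↦ mem_span_image_of_topIndex_le (le_of_eq hv)
    _ ≤ κ := (b.mk_span_image_le _).trans (mk_finsupp_le_of_le hκ hw hR)

end Cardinality

theorem exists_partition_linearIndepOn {ι R M γ : Type u} [LinearOrder ι] [DivisionRing R]
    [AddCommGroup M] [Module R M] (b : Basis ι R M) (hγ : ℵ₀ ≤ #γ) (hR : #R ≤ #γ)
    (hι : ∀ i : ι, #(Iic i) ≤ #γ) :
    ∃ c : γ → Set M, (∀ j, LinearIndepOn R id (c j)) ∧ Pairwise (Function.onFun Disjoint c) ∧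
      ⋃ j, c j = {v | v ≠ 0} := by
  obtain ⟨g, hg⟩ := exists_injective_prod_of_mk_fiber_le b.topIndex
    (b.mk_topIndex_fiber_le hγ hR hι)
  refine ⟨fun j ↦ g ⁻¹' {j} \ {0}, fun j ↦ ?_, fun j j' hjj' ↦ ?_, ?_⟩
  · exact linearIndepOn_of_injOn_topIndex (b := b) (fun h ↦ h.2 rfl)
      fun v hv w hw hvw ↦ hg (Prod.ext hvw (hv.1.trans hw.1.symm))
  · exact (Disjoint.mono sdiff_subset sdiff_subset) ((disjoint_singleton.2 hjj').preimage g)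
  · ext v
    simp

end Module.Basis

open Cardinal in
theorem stmt4 {F : Type u} {V : Type u} [Field F] [AddCommGroup V] [Module F V]
    (κ : Cardinal.{u}) (hκ : ℵ₀ ≤ κ) (hF : #F ≤ κ)
    (hdim : Module.rank F V = Order.succ κ) :
    ∃ c : κ.out → Set V, (∀ i, LinearIndependent F (Subtype.val : c i → V)) ∧
      Pairwise (Function.onFun Disjoint c) ∧
      (⋃ i, c i) = {v : V | v ≠ 0} := by
  let ι := (Order.succ κ).ord.ToType
  have hι : #ι = Order.succ κ := mk_ord_toType _
  obtain ⟨e⟩ : Nonempty (Module.Basis.ofVectorSpaceIndex F V ≃ ι) := Cardinal.eq.1 <| by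
    rw [(Module.Basis.ofVectorSpace F V).mk_eq_rank'', hdim, hι]
  have hIic (i : ι) : #(Iic i) ≤ #κ.out := by
    rw [mk_out, ← Order.lt_succ_iff]
    refine (mk_Iic_lt i ?_ ?_).trans_eq hι
    · rw [hι, Ordinal.type_toType]
    · exact hι ▸ hκ.trans (Order.le_succ κ)
  exact ((Module.Basis.ofVectorSpace F V).reindex e).exists_partition_linearIndepOn
    (by rwa [mk_out]) (by rwa [mk_out]) hIic
end

section
/- Let κ be an infinite cardinal and K the complete graph on κ⁺ many vertices. Then there exists an edge coloring of K with κ colors having no monochromatic cycles. -/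
/-!
Well-order the vertices in order type κ⁺, so that every vertex has at most κ predecessors, and
colour the edge from a vertex to each of its predecessors injectively. On any cycle the largest
vertex is joined to two distinct smaller vertices, so its two cycle edges get different colours.
-/

namespace SimpleGraph.Walk

variable {V : Type*} {G : SimpleGraph V} {u : V}

lemma IsCycle.exists_ne_mem_edges {p : G.Walk u u} (hp : p.IsCycle) {v : V}
    (hv : v ∈ p.support) : ∃ x y, x ≠ y ∧ s(v, x) ∈ p.edges ∧ s(v, y) ∈ p.edges := by
  classical
  have hq := hp.rotate hv
  refine ⟨(p.rotate v hv).snd, (p.rotate v hv).penultimate, hq.snd_ne_penultimate, ?_, ?_⟩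
  · exact (p.rotate_edges v hv).mem_iff.mp (mk_start_snd_mem_edges hq.not_nil)
  · rw [Sym2.eq_swap]
    exact (p.rotate_edges v hv).mem_iff.mp (mk_penultimate_end_mem_edges hq.not_nil)

lemma IsCycle.exists_edges_ne_of_injOn_Iio [LinearOrder V] {C : Type*} {χ : Sym2 V → C}
    (hχ : ∀ v, (Set.Iio v).InjOn fun a => χ s(a, v))
    {p : G.Walk u u} (hp : p.IsCycle) : ∃ e ∈ p.edges, ∃ e' ∈ p.edges, χ e ≠ χ e' := by
  classical
  have hne : p.support.toFinset.Nonempty := ⟨u, by simp⟩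
  set m := p.support.toFinset.max' hne
  have hm : m ∈ p.support := List.mem_toFinset.mp (p.support.toFinset.max'_mem hne)
  have lt_m {x : V} (hx : s(m, x) ∈ p.edges) : x < m :=
    lt_of_le_of_ne (p.support.toFinset.le_max' x (List.mem_toFinset.mpr
      (p.snd_mem_support_of_mem_edges hx))) (p.adj_of_mem_edges hx).ne.symm
  obtain ⟨x, y, hxy, hx, hy⟩ := hp.exists_ne_mem_edges hm
  refine ⟨_, hx, _, hy, fun h => hxy (hχ m (lt_m hx) (lt_m hy) ?_)⟩
  show χ s(x, m) = χ s(y, m)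
  rwa [Sym2.eq_swap, Sym2.eq_swap (a := y)]

end SimpleGraph.Walk

section Coloring

open Cardinal

variable {V C : Type u}

lemma exists_linearOrder_mk_Iio_le {κ : Cardinal.{u}} (hV : #V = Order.succ κ) :
    ∃ _ : LinearOrder V, ∀ v : V, #(Set.Iio v) ≤ κ := by
  obtain ⟨e⟩ := Cardinal.eq.mp (hV.trans (mk_ord_toType _).symm)
  let : LinearOrder V := LinearOrder.lift' e e.injective
  refine ⟨this, fun v => ?_⟩
  have hIio : Set.Iio v = e ⁻¹' Set.Iio (e v) := rfl
  have hlt := mk_Iio_lt (e v) (by rw [mk_ord_toType, Ordinal.type_toType])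
  rwa [mk_ord_toType, Order.lt_succ_iff, ← mk_preimage_equiv e, ← hIio] at hlt

lemma exists_injOn_of_mk_le [Nonempty C] {s : Set V} (h : #s ≤ #C) :
    ∃ f : V → C, s.InjOn f := by
  classical
  obtain ⟨g⟩ := h
  refine ⟨fun x => if hx : x ∈ s then g ⟨x, hx⟩ else Classical.arbitrary C,
    fun a ha b hb hab => ?_⟩
  simpa [ha, hb] using hab

lemma exists_sym2_coloring_injOn_Iio [LinearOrder V] [Nonempty C]
    (h : ∀ v : V, #(Set.Iio v) ≤ #C) :
    ∃ χ : Sym2 V → C, ∀ v, (Set.Iio v).InjOn fun a => χ s(a, v) := by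
  choose f hf using fun v => exists_injOn_of_mk_le (h v)
  refine ⟨Sym2.lift ⟨fun a b => f (max a b) (min a b), fun a b => by
    simp only [max_comm, min_comm]⟩, fun v a ha b hb hab => hf v ha hb ?_⟩
  simpa [max_eq_right ha.le, min_eq_left ha.le, max_eq_right hb.le, min_eq_left hb.le] using hab

end Coloring

open Cardinal in
theorem stmt6 {V : Type u} (κ : Cardinal.{u}) (hκ : ℵ₀ ≤ κ)
    (hV : #V = Order.succ κ) :
    ∃ χ : Sym2 V → κ.out,
      ∀ (v : V) (p : (⊤ : SimpleGraph V).Walk v v), p.IsCycle →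
        ¬ ∃ c : κ.out, ∀ e ∈ p.edges, χ e = c := by
  obtain ⟨_, hIio⟩ := exists_linearOrder_mk_Iio_le hV
  have : Nonempty κ.out := mk_ne_zero_iff.mp (by rw [mk_out]; exact (aleph0_pos.trans_le hκ).ne')
  obtain ⟨χ, hχ⟩ := exists_sym2_coloring_injOn_Iio fun v => (hIio v).trans (mk_out κ).ge
  refine ⟨χ, fun v p hp ⟨c, hc⟩ => ?_⟩
  obtain ⟨e, he, e', he', hne⟩ := hp.exists_edges_ne_of_injOn_Iio hχ
  exact hne ((hc e he).trans (hc e' he').symm)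
end

section
/- Let κ be an infinite cardinal and G an abelian group with |G| ≤ κ⁺ such that the torsion part G[ℕ] has cardinality at most κ. Then G \ {0} can be covered by κ many linearly independent subsets. -/
/-!
Enumerate `G` in order type `κ⁺` and let `H z` be the saturation (pure closure) of the
subgroup generated by the elements enumerated before `z`. Each `H z` has size at most `κ`: the
subgroup generated by fewer than `κ⁺` elements has size `≤ κ`, and saturating it costs at most
a factor `ℵ₀ · |G[ℕ]|`. Colour each `x ≠ 0` by an injective code of `x` inside `H (ℓ x)`, where
`ℓ x` is the first stage containing `x`. Within a colour class `ℓ` is injective, and in a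
relation `Σ λᵢ aᵢ = 0` the term with the largest stage satisfies `λ a ∈ H z` for an earlier
stage `z`; saturation of `H z` and minimality of `ℓ a` force `λ a = 0`.
-/

/-- Linear independence of a subset of an abelian group in the sense of Fuchs:
`Σ λᵢ • aᵢ = 0` with distinct `aᵢ` implies each `λᵢ • aᵢ = 0`. -/
def LinIndepSet {G : Type*} [AddCommGroup G] (A : Set G) : Prop :=
  ∀ (s : Finset G), ↑s ⊆ A → ∀ l : G → ℤ,
    ∑ a ∈ s, l a • a = 0 → ∀ a ∈ s, l a • a = 0

open Cardinal Set

namespace AddSubgroup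

variable {G : Type*} [AddCommGroup G]

def saturation (C : AddSubgroup G) : AddSubgroup G :=
  (AddCommGroup.torsion (G ⧸ C)).comap (QuotientAddGroup.mk' C)

theorem mem_saturation {C : AddSubgroup G} {x : G} :
    x ∈ C.saturation ↔ ∃ n : ℕ, 0 < n ∧ n • x ∈ C := by
  simp only [saturation, mem_comap, AddCommGroup.mem_torsion, isOfFinAddOrder_iff_nsmul_eq_zero,
    QuotientAddGroup.mk'_apply, ← QuotientAddGroup.mk_nsmul, QuotientAddGroup.eq_zero_iff]

theorem le_saturation (C : AddSubgroup G) : C ≤ C.saturation :=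
  fun x hx => mem_saturation.2 ⟨1, one_pos, by rwa [one_smul]⟩

theorem saturation_mono {C D : AddSubgroup G} (h : C ≤ D) : C.saturation ≤ D.saturation :=
  fun _ hx => let ⟨n, hn, hnx⟩ := mem_saturation.1 hx; mem_saturation.2 ⟨n, hn, h hnx⟩

theorem nsmulSaturated_saturation (C : AddSubgroup G) : C.saturation.NSMulSaturated := by
  intro n x hnx
  obtain ⟨m, hm, hmnx⟩ := mem_saturation.1 hnx
  refine or_iff_not_imp_left.2 fun hn => mem_saturation.2 ⟨m * n, by positivity, ?_⟩
  rwa [mul_smul]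

theorem mk_saturation_le (C : AddSubgroup G) :
    #C.saturation ≤ ℵ₀ * #C * #(AddCommGroup.torsion G) := by
  -- `x ↦ (n, n • x)` has fibres that are translates of subsets of the torsion subgroup.
  choose n hn hnC using fun x : C.saturation => mem_saturation.1 x.2
  let F : C.saturation → ℕ × C := fun x => (n x, ⟨n x • (x : G), hnC x⟩)
  have hfiber : ∀ b, #(F ⁻¹' {b}) ≤ #(AddCommGroup.torsion G) := by
    rintro ⟨k, c⟩
    rcases isEmpty_or_nonempty (F ⁻¹' {(k, c)}) with _ | ⟨y₀, hy₀⟩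
    · simp
    have hF : ∀ y ∈ F ⁻¹' {(k, c)}, n y = k ∧ k • (y : G) = c := by
      rintro y hy
      simp only [mem_preimage, mem_singleton_iff, Prod.mk.injEq, F] at hy
      exact ⟨hy.1, hy.1 ▸ congrArg Subtype.val hy.2⟩
    refine mk_le_of_injective (f := fun y : F ⁻¹' {(k, c)} =>
      (⟨(y : G) - y₀, (AddCommGroup.mem_torsion _).2 <| isOfFinAddOrder_iff_nsmul_eq_zero.2
        ⟨k, (hF y₀ hy₀).1 ▸ hn y₀, ?_⟩⟩ : AddCommGroup.torsion G)) fun y y' h => ?_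
    · rw [nsmul_sub, (hF y y.2).2, (hF y₀ hy₀).2, sub_self]
    · exact Subtype.ext (Subtype.ext (by simpa using h))
  simpa [F, mul_assoc] using mk_le_mk_mul_of_mk_preimage_le F hfiber

theorem mk_closure_le_max (s : Set G) : #(closure s) ≤ max #s ℵ₀ := by
  rw [FreeAddGroup.closure_eq_range]
  refine mk_range_le.trans ?_
  rcases isEmpty_or_nonempty s with _ | _ <;> simp

theorem mk_saturation_closure_le {s : Set G} {κ : Cardinal} (hκ : ℵ₀ ≤ κ) (hs : #s ≤ κ)
    (htor : #(AddCommGroup.torsion G) ≤ κ) : #(closure s).saturation ≤ κ :=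
  calc #(closure s).saturation
      ≤ ℵ₀ * #(closure s) * #(AddCommGroup.torsion G) := mk_saturation_le _
    _ ≤ κ * κ * κ := by gcongr; exact (mk_closure_le_max s).trans (max_le hs hκ)
    _ = κ := by rw [mul_eq_self hκ, mul_eq_self hκ]

end AddSubgroup

variable {G : Type*} [AddCommGroup G]

theorem LinIndepSet.of_filtration {ι : Type*} [LinearOrder ι] {A : Set G}
    (H : ι → AddSubgroup G) (hH : Monotone H) (ℓ : G → ι) (hℓ : InjOn ℓ A)
    (hA : ∀ a ∈ A, a ∈ H (ℓ a))
    (hlow : ∀ a ∈ A, ∀ z < ℓ a, ∀ k : ℤ, k • a ∈ H z → k • a = 0) :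
    LinIndepSet A := by
  classical
  intro s
  induction s using Finset.induction_on_max_value ℓ with
  | empty => simp
  | insert a s has hmax ih =>
    intro hsA l hsum
    rw [Finset.coe_insert, insert_subset_iff] at hsA
    rw [Finset.sum_insert has] at hsum
    have hlt : ∀ b ∈ s, ℓ b < ℓ a := fun b hb =>
      (hmax b hb).lt_of_ne fun h => has (hℓ (hsA.2 hb) hsA.1 h ▸ hb)
    have ha : l a • a = 0 := by
      rcases s.eq_empty_or_nonempty with rfl | hne
      · simpa using hsum
      obtain ⟨b₀, hb₀, hb₀max⟩ := s.exists_max_image ℓ hne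
      refine hlow a hsA.1 (ℓ b₀) (hlt b₀ hb₀) (l a) ?_
      rw [eq_neg_of_add_eq_zero_left hsum]
      exact neg_mem <| sum_mem fun b hb => zsmul_mem (hH (hb₀max b hb) (hA b (hsA.2 hb))) _
    rw [ha, zero_add] at hsum
    intro b hb
    rcases Finset.mem_insert.1 hb with rfl | hb
    · exact ha
    · exact ih hsA.2 l hsum b hb

theorem exists_linIndepSet_cover_of_saturated_chain {ι K : Type*} [LinearOrder ι]
    [WellFoundedLT ι]
    (H : ι → AddSubgroup G) (hH : Monotone H) (hsat : ∀ z, (H z).NSMulSaturated)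
    (hcover : ∀ x, ∃ z, x ∈ H z) (hcard : ∀ z, Nonempty (H z ↪ K)) :
    ∃ c : K → Set G, (∀ i, LinIndepSet (c i)) ∧ {x : G | x ≠ 0} ⊆ ⋃ i, c i := by
  classical
  have wf : WellFounded ((· < ·) : ι → ι → Prop) := wellFounded_lt
  let ℓ : G → ι := fun x => wf.min {z | x ∈ H z} (hcover x)
  have hℓ : ∀ x, x ∈ H (ℓ x) := fun x => wf.min_mem _ (hcover x)
  have hℓ_le : ∀ x z, x ∈ H z → ℓ x ≤ z := fun x z hz => wf.min_le hz
  have hcode : ∀ z, ∃ f : G → K, InjOn f (H z) := fun z => by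
    obtain ⟨e⟩ := hcard z
    exact ⟨fun x => if h : x ∈ H z then e ⟨x, h⟩ else e 0, fun x hx y hy hxy => by
      simpa [show x ∈ H z from hx, show y ∈ H z from hy] using hxy⟩
  choose f hf using hcode
  refine ⟨fun i => {x | x ≠ 0 ∧ f (ℓ x) x = i}, fun i => ?_,
    fun x hx => mem_iUnion.2 ⟨_, hx, rfl⟩⟩
  refine LinIndepSet.of_filtration H hH ℓ (fun x hx y hy hxy => ?_) (fun a _ => hℓ a) ?_
  · exact hf (ℓ y) (hxy ▸ hℓ x) (hℓ y)
      ((congrArg (f · x) hxy).symm.trans (hx.2.trans hy.2.symm))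
  · intro a _ z hz k hka
    rcases AddSubgroup.saturated_iff_zsmul.1 (hsat z) k a hka with rfl | ha
    · exact zero_smul ℤ a
    · exact absurd (hℓ_le a z ha) (not_le.2 hz)

open Cardinal in
theorem stmt12 {G : Type u} [AddCommGroup G] (κ : Cardinal.{u}) (hκ : ℵ₀ ≤ κ)
    (hG : #G ≤ Order.succ κ)
    (htor : #{x : G | ∃ n : ℕ, 0 < n ∧ n • x = 0} ≤ κ) :
    ∃ c : κ.out → Set G, (∀ i, LinIndepSet (c i)) ∧
      {x : G | x ≠ 0} ⊆ ⋃ i, c i := by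
  obtain ⟨r⟩ : Nonempty (G ↪ (Order.succ κ).ord.ToType) := by
    rwa [← Cardinal.le_def, Cardinal.mk_ord_toType]
  have := Cardinal.noMaxOrder (hκ.trans (Order.le_succ κ))
  let H : (Order.succ κ).ord.ToType → AddSubgroup G :=
    fun z => (AddSubgroup.closure (r ⁻¹' Iio z)).saturation
  refine exists_linIndepSet_cover_of_saturated_chain H (fun z z' h => ?_)
    (fun z => AddSubgroup.nsmulSaturated_saturation _) (fun x => ?_) (fun z => ?_)
  · exact AddSubgroup.saturation_mono <| AddSubgroup.closure_mono <| preimage_mono <|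
      Iio_subset_Iio h
  · obtain ⟨z, hz⟩ := exists_gt (r x)
    exact ⟨z, AddSubgroup.le_saturation _ (AddSubgroup.subset_closure hz)⟩
  · have htor' : #(AddCommGroup.torsion G) ≤ κ := (mk_congr (Equiv.subtypeEquivRight
      fun x => (AddCommGroup.mem_torsion x).trans isOfFinAddOrder_iff_nsmul_eq_zero)).trans_le htor
    rw [← Cardinal.le_def, Cardinal.mk_out]
    refine AddSubgroup.mk_saturation_closure_le hκ ?_ htor'
    exact (mk_preimage_of_injective _ _ r.injective).trans
      (Order.lt_succ_iff.1 <|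
        (mk_Iio_lt z (by rw [mk_ord_toType, Ordinal.type_toType])).trans_eq (mk_ord_toType _))
end

section
/- Let κ be an infinite cardinal and G an abelian group such that G \ {0} can be covered by κ many linearly independent subsets. If the torsion part G[ℕ] has cardinality greater than κ, then G = G[p] for some prime p, i.e., every element of G has order dividing p. -/
/-! If `κ < #G[n]`, then for every `x` with `n • x ≠ 0` the coset `x + G[n]` avoids `0`, so
by pigeonhole two distinct elements `a`, `b` of it lie in one independent set of the cover;
as `n • a = n • b`, independence forces `n • a = 0`, that is `n • x = 0`. Such an `n` exists
because the torsion part is the countable union of the `G[n]`, and it can be taken prime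
because `#G[d * e] ≤ #G[d] * #G[e]`. -/

open Cardinal Set Function

section

variable {G : Type u} [AddCommGroup G]

theorem LinIndepSet.nsmul_eq_zero_of_nsmul_eq {A : Set G} (hA : LinIndepSet A) {a b : G}
    (ha : a ∈ A) (hb : b ∈ A) (hab : a ≠ b) {n : ℕ} (h : n • a = n • b) : n • a = 0 := by
  classical
  have hsub : (({a, b} : Finset G) : Set G) ⊆ A := by simp [insert_subset_iff, ha, hb]
  have hsum := hA {a, b} hsub (fun g => if g = a then (n : ℤ) else -n)
    (by simp [Finset.sum_pair hab, hab.symm, h])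
  simpa using hsum a (by simp)

theorem mk_setOf_mul_nsmul_eq_zero_le (d e : ℕ) :
    #{x : G | (d * e) • x = 0} ≤ #{x : G | d • x = 0} * #{x : G | e • x = 0} := by
  let f : {x : G | (d * e) • x = 0} → {x : G | d • x = 0} :=
    fun x => ⟨e • x.1, by rw [mem_ofPred_eq, smul_smul]; exact x.2⟩
  refine mk_le_mk_mul_of_mk_preimage_le f fun b => ?_
  rcases (f ⁻¹' {b}).eq_empty_or_nonempty with h | ⟨y₀, hy₀⟩
  · simp [h]
  refine mk_le_of_injective (f := fun y : f ⁻¹' {b} => ⟨y.1.1 - y₀.1, ?_⟩) ?_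
  · have hy : e • y.1.1 = e • y₀.1 := congrArg Subtype.val (y.2.trans hy₀.symm)
    simp [smul_sub, hy]
  · intro y z hyz
    exact Subtype.ext (Subtype.ext (sub_left_injective (congrArg Subtype.val hyz)))

variable {κ : Cardinal.{u}}

theorem exists_pos_lt_mk_nsmul_eq_zero (hκ : ℵ₀ ≤ κ)
    (h : κ < #{x : G | ∃ n : ℕ, 0 < n ∧ n • x = 0}) :
    ∃ n : ℕ, 0 < n ∧ κ < #{x : G | n • x = 0} := by
  by_contra! hle
  have htor : {x : G | ∃ n : ℕ, 0 < n ∧ n • x = 0} = ⋃ n : ℕ, {x : G | (n + 1) • x = 0} := by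
    ext x
    simp only [mem_ofPred_eq, mem_iUnion]
    constructor
    · rintro ⟨n, hn, hx⟩
      exact ⟨n - 1, by rwa [Nat.sub_add_cancel hn]⟩
    · rintro ⟨n, hx⟩
      exact ⟨n + 1, n.succ_pos, hx⟩
  refine h.not_ge ?_
  calc #{x : G | ∃ n : ℕ, 0 < n ∧ n • x = 0}
      = lift.{0} #(⋃ n : ℕ, {x : G | (n + 1) • x = 0}) := by rw [htor, lift_uzero]
    _ ≤ lift.{u} #ℕ * ⨆ n : ℕ, lift.{0} #{x : G | (n + 1) • x = 0} := mk_iUnion_le_lift _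
    _ ≤ ℵ₀ * κ := by
      simpa only [mk_nat, lift_aleph0, lift_uzero] using
        mul_le_mul' le_rfl (ciSup_le' fun n => hle _ n.succ_pos)
    _ = κ := aleph0_mul_eq hκ

theorem exists_prime_lt_mk_nsmul_eq_zero (hκ : ℵ₀ ≤ κ) {n : ℕ} (hn : 0 < n)
    (h : κ < #{x : G | n • x = 0}) : ∃ p : ℕ, p.Prime ∧ κ < #{x : G | p • x = 0} := by
  induction n using Nat.recOnMul with
  | zero => exact absurd hn (lt_irrefl 0)
  | one =>
    simp only [one_smul, ofPred_eq_eq_singleton, mk_singleton] at h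
    exact absurd h (one_le_aleph0.trans hκ).not_gt
  | prime p hp => exact ⟨p, hp, h⟩
  | mul a b iha ihb =>
    obtain ⟨ha, hb⟩ := CanonicallyOrderedAdd.mul_pos.1 hn
    by_cases hκa : κ < #{x : G | a • x = 0}
    · exact iha ha hκa
    by_cases hκb : κ < #{x : G | b • x = 0}
    · exact ihb hb hκb
    refine absurd h (not_lt.2 ?_)
    calc #{x : G | (a * b) • x = 0} ≤ #{x : G | a • x = 0} * #{x : G | b • x = 0} :=
          mk_setOf_mul_nsmul_eq_zero_le a b
      _ ≤ κ * κ := mul_le_mul' (not_lt.1 hκa) (not_lt.1 hκb)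
      _ = κ := mul_eq_self hκ

theorem nsmul_eq_zero_of_mk_lt_mk_nsmul_eq_zero {ι : Type u} {c : ι → Set G}
    (hc : ∀ i, LinIndepSet (c i)) (hcov : {x : G | x ≠ 0} ⊆ ⋃ i, c i) {n : ℕ}
    (hn : #ι < #{x : G | n • x = 0}) (x : G) : n • x = 0 := by
  by_contra hx
  have hne : ∀ s : {y : G | n • y = 0}, x + s ≠ 0 := fun s hs =>
    hx (by rw [eq_neg_of_add_eq_zero_left hs, smul_neg, s.2, neg_zero])
  choose f hf using fun s => mem_iUnion.1 (hcov (hne s))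
  obtain ⟨s, t, hst, hs_ne_t⟩ :=
    not_injective_iff.1 fun hinj : Injective f => (mk_le_of_injective hinj).not_gt hn
  have hs : n • (s : G) = 0 := s.2
  have ht : n • (t : G) = 0 := t.2
  have hxs := (hc (f s)).nsmul_eq_zero_of_nsmul_eq (hf s) (hst ▸ hf t)
    (by simpa using Subtype.val_injective.ne hs_ne_t) (by rw [smul_add, smul_add, hs, ht])
  rw [smul_add, hs, add_zero] at hxs
  exact hx hxs

end

open Cardinal in
theorem stmt13 {G : Type u} [AddCommGroup G] (κ : Cardinal.{u}) (hκ : ℵ₀ ≤ κ)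
    (hcover : ∃ c : κ.out → Set G, (∀ i, LinIndepSet (c i)) ∧
      {x : G | x ≠ 0} ⊆ ⋃ i, c i)
    (htor : κ < #{x : G | ∃ n : ℕ, 0 < n ∧ n • x = 0}) :
    ∃ p : ℕ, p.Prime ∧ ∀ x : G, p • x = 0 := by
  obtain ⟨c, hc, hcov⟩ := hcover
  obtain ⟨n, hn, hκn⟩ := exists_pos_lt_mk_nsmul_eq_zero hκ htor
  obtain ⟨p, hp, hκp⟩ := exists_prime_lt_mk_nsmul_eq_zero hκ hn hκn
  exact ⟨p, hp, nsmul_eq_zero_of_mk_lt_mk_nsmul_eq_zero hc hcov (by rwa [mk_out])⟩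
end

section
/- If a subset A of the abelian group G \ {0} lies in a coset a + G[pⁿ] for some a ∈ G with pⁿ·a ≠ 0, and A contains two distinct elements, then A is linearly dependent. Consequently, if G \ {0} is covered by κ many linearly independent subsets and |G[pⁿ]| = κ⁺ > κ, then G = G[pⁿ]. -/
open Cardinal in
theorem stmt15 {G : Type u} [AddCommGroup G] (p n : ℕ) (hp : p.Prime) (hn : 1 ≤ n)
    (κ : Cardinal.{u}) (hκ : ℵ₀ ≤ κ) :
    (∀ (a : G), p ^ n • a ≠ 0 → ∀ A : Set G, A ⊆ {x : G | x ≠ 0} →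
      A ⊆ {y : G | ∃ x : G, p ^ n • x = 0 ∧ y = a + x} →
      (∃ x ∈ A, ∃ y ∈ A, x ≠ y) → ¬ LinIndepSet A) ∧
    ((∃ c : κ.out → Set G, (∀ i, LinIndepSet (c i)) ∧
        {x : G | x ≠ 0} ⊆ ⋃ i, c i) →
      #{x : G | p ^ n • x = 0} = Order.succ κ →
      ∀ x : G, p ^ n • x = 0) := by
  classical
  have part1 : ∀ (a : G), p ^ n • a ≠ 0 → ∀ A : Set G, A ⊆ {x : G | x ≠ 0} →
      A ⊆ {y : G | ∃ x : G, p ^ n • x = 0 ∧ y = a + x} →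
      (∃ x ∈ A, ∃ y ∈ A, x ≠ y) → ¬ LinIndepSet A := by
    rintro a ha A _ hcos ⟨x, hx, y, hy, hxy⟩ hind
    obtain ⟨u, hu, hxe⟩ := hcos hx
    obtain ⟨v, hv, hye⟩ := hcos hy
    have hpx : p ^ n • x = p ^ n • a := by rw [hxe, smul_add, hu, add_zero]
    have hpy : p ^ n • y = p ^ n • a := by rw [hye, smul_add, hv, add_zero]
    set l : G → ℤ := fun z => if z = x then (p ^ n : ℤ) else -(p ^ n : ℤ) with hl
    have hsub : ↑({x, y} : Finset G) ⊆ A := by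
      intro z hz
      simp only [Finset.coe_insert, Finset.coe_singleton, Set.mem_insert_iff,
        Set.mem_singleton_iff] at hz
      rcases hz with rfl | rfl <;> assumption
    have hsum : ∑ z ∈ ({x, y} : Finset G), l z • z = 0 := by
      rw [Finset.sum_pair hxy]
      simp only [hl, if_pos rfl, if_neg (Ne.symm hxy)]
      rw [neg_smul, ← Nat.cast_pow, natCast_zsmul, natCast_zsmul, hpx, hpy, add_neg_cancel]
    have := hind {x, y} hsub l hsum x (by simp)
    simp only [hl, if_pos rfl, ← Nat.cast_pow, natCast_zsmul, hpx] at this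
    exact ha this
  refine ⟨part1, ?_⟩
  rintro ⟨c, hci, hcov⟩ hcard x
  by_contra hx
  set S : Set G := {y : G | ∃ u : G, p ^ n • u = 0 ∧ y = x + u} with hS
  have hSim : S = (fun u => x + u) '' {u : G | p ^ n • u = 0} := by
    ext y; constructor
    · rintro ⟨u, hu, rfl⟩; exact ⟨u, hu, rfl⟩
    · rintro ⟨u, hu, rfl⟩; exact ⟨u, hu, rfl⟩
  have hScard : #S = Order.succ κ := by
    rw [hSim, Cardinal.mk_image_eq (add_right_injective x), ← hcard]
  have hS0 : S ⊆ {z : G | z ≠ 0} := by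
    rintro y ⟨u, hu, rfl⟩ h0
    apply hx
    have h0' : x + u = 0 := h0
    calc p ^ n • x = p ^ n • (x + u) := by rw [smul_add, hu, add_zero]
      _ = 0 := by rw [h0', smul_zero]
  have hsub : ∀ i, (c i ∩ S).Subsingleton := by
    intro i y hy z hz
    by_contra hne
    apply part1 x hx (c i ∩ S) (fun w hw => hS0 hw.2) (fun w hw => hw.2)
      ⟨y, hy, z, hz, hne⟩
    intro s hs l hsum
    exact hci i s (hs.trans Set.inter_subset_left) l hsum
  have hScov : S ⊆ ⋃ i, (c i ∩ S) := by
    intro y hy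
    obtain ⟨i, hi⟩ := Set.mem_iUnion.mp (hcov (hS0 hy))
    exact Set.mem_iUnion.mpr ⟨i, hi, hy⟩
  have h1 : #S ≤ κ := by
    calc #S ≤ #(⋃ i, (c i ∩ S) : Set G) := Cardinal.mk_le_mk_of_subset hScov
      _ ≤ #(κ.out) * ⨆ i, #(c i ∩ S : Set G) := Cardinal.mk_iUnion_le _
      _ ≤ κ * 1 := by
          rw [Cardinal.mk_out]
          exact mul_le_mul_right (ciSup_le' fun i =>
            Cardinal.mk_le_one_iff_set_subsingleton.mpr (hsub i)) κ
      _ = κ := mul_one κ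
  exact absurd (hScard ▸ h1) (not_le.mpr (Order.lt_succ κ))
end

section
/- The abelian group ℝ with zero removed can be partitioned into countably many independent subsets (where A is independent if n₁a₁+⋯+nₖaₖ = 0 with distinct aᵢ ∈ A and integers nᵢ implies nᵢaᵢ = 0 for all i) if and only if the Continuum Hypothesis holds. -/
open Cardinal Set

universe u

section Level

variable {G ι : Type*} [AddCommGroup G] [LinearOrder ι]

theorem linIndepSet_of_injOn {lev : G → ι}
    (lev_add : ∀ x y, lev (x + y) ≤ max (lev x) (lev y))
    (lev_zsmul : ∀ (n : ℤ) x, n • x ≠ 0 → lev (n • x) = lev x)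
    {A : Set G} (hA : InjOn lev A) : LinIndepSet A := by
  classical
  intro s hs l hsum
  by_contra! h
  obtain ⟨a₀, ha₀s, ha₀⟩ := h
  obtain ⟨a, has, ha, hmax⟩ :
      ∃ a ∈ s, l a • a ≠ 0 ∧ ∀ x ∈ s, l x • x ≠ 0 → lev x ≤ lev a := by
    obtain ⟨a, ha, hmax⟩ := (s.filter fun x => l x • x ≠ 0).exists_max_image lev
      ⟨a₀, Finset.mem_filter.2 ⟨ha₀s, ha₀⟩⟩
    rw [Finset.mem_filter] at ha
    exact ⟨a, ha.1, ha.2, fun x hx hx0 => hmax x (Finset.mem_filter.2 ⟨hx, hx0⟩)⟩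
  have hrest : ∀ x ∈ s.erase a, (-l x) • x = 0 ∨ lev ((-l x) • x) < lev a := by
    intro x hx
    obtain ⟨hxa, hxs⟩ := Finset.mem_erase.1 hx
    refine or_iff_not_imp_left.2 fun hx0 => ?_
    rw [lev_zsmul _ _ hx0]
    rw [neg_smul, neg_eq_zero] at hx0
    exact (hmax x hxs hx0).lt_of_ne fun h => hxa (hA (hs hxs) (hs has) h)
  have heq : l a • a = ∑ x ∈ s.erase a, (-l x) • x := by
    rw [← Finset.add_sum_erase s _ has] at hsum
    simp only [neg_smul, Finset.sum_neg_distrib]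
    exact eq_neg_of_add_eq_zero_left hsum
  have hsmall : l a • a = 0 ∨ lev (l a • a) < lev a := by
    rw [heq]
    refine Finset.sum_induction _ (fun z => z = 0 ∨ lev z < lev a) ?_ (Or.inl rfl) hrest
    rintro y z (rfl | hy) (rfl | hz)
    · exact Or.inl (add_zero 0)
    · rw [zero_add]; exact Or.inr hz
    · rw [add_zero]; exact Or.inr hy
    · exact Or.inr ((lev_add y z).trans_lt (max_lt hy hz))
  rcases hsmall with h | h
  · exact ha h
  · exact (lev_zsmul _ _ ha ▸ h).false

theorem exists_partition_linIndepSet_of_level {lev : G → ι}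
    (lev_add : ∀ x y, lev (x + y) ≤ max (lev x) (lev y))
    (lev_zsmul : ∀ (n : ℤ) x, n • x ≠ 0 → lev (n • x) = lev x)
    (lev_fiber : ∀ o, (lev ⁻¹' {o}).Countable) :
    ∃ c : ℕ → Set G, (∀ i, LinIndepSet (c i)) ∧ Pairwise (Function.onFun Disjoint c) ∧
      ⋃ i, c i = {x | x ≠ 0} := by
  choose g hg using fun o => countable_iff_exists_injOn.1 (lev_fiber o)
  refine ⟨fun n => {x | x ≠ 0 ∧ g (lev x) x = n},
    fun n => linIndepSet_of_injOn lev_add lev_zsmul ?_,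
    fun m n hmn => disjoint_left.2 fun x hm hn => hmn (hm.2.symm.trans hn.2), ?_⟩
  · rintro x ⟨-, hx⟩ y ⟨-, hy⟩ hxy
    rw [← hxy] at hy
    exact hg (lev x) rfl hxy.symm (hx.trans hy.symm)
  · ext x
    simp

end Level

section Filtration

variable {V ι : Type*} [AddCommGroup V] [Module ℚ V] [LinearOrder ι] [WellFoundedLT ι]

noncomputable def filtrationLevel (S : ι → Submodule ℚ V) (hS : ∀ x, ∃ o, x ∈ S o) (x : V) : ι :=
  wellFounded_lt.min {o | x ∈ S o} (hS x)

variable {S : ι → Submodule ℚ V} (hmono : Monotone S) (hS : ∀ x, ∃ o, x ∈ S o)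
include hmono hS

theorem filtrationLevel_le_iff {x : V} {o : ι} : filtrationLevel S hS x ≤ o ↔ x ∈ S o :=
  ⟨fun h => hmono h (WellFounded.min_mem _ _ (hS x)),
    fun h => WellFounded.min_le _ (show o ∈ {p | x ∈ S p} from h)⟩

theorem filtrationLevel_add_le (x y : V) :
    filtrationLevel S hS (x + y) ≤ max (filtrationLevel S hS x) (filtrationLevel S hS y) := by
  rw [filtrationLevel_le_iff hmono]
  exact add_mem ((filtrationLevel_le_iff hmono hS).1 (le_max_left _ _))
    ((filtrationLevel_le_iff hmono hS).1 (le_max_right _ _))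

theorem filtrationLevel_zsmul (n : ℤ) (x : V) (h : n • x ≠ 0) :
    filtrationLevel S hS (n • x) = filtrationLevel S hS x := by
  have hn : (n : ℚ) ≠ 0 := by
    rintro hn
    exact h (by rw [Int.cast_eq_zero.1 hn, zero_smul])
  refine le_antisymm ((filtrationLevel_le_iff hmono hS).2 ?_)
    ((filtrationLevel_le_iff hmono hS).2 ?_)
  · exact zsmul_mem ((filtrationLevel_le_iff hmono hS).1 le_rfl) n
  · rw [← Submodule.smul_mem_iff _ hn, Int.cast_smul_eq_zsmul]
    exact (filtrationLevel_le_iff hmono hS).1 le_rfl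

theorem exists_partition_linIndepSet_of_filtration (hcount : ∀ o, (S o : Set V).Countable) :
    ∃ c : ℕ → Set V, (∀ i, LinIndepSet (c i)) ∧ Pairwise (Function.onFun Disjoint c) ∧
      ⋃ i, c i = {x | x ≠ 0} :=
  exists_partition_linIndepSet_of_level (filtrationLevel_add_le hmono hS)
    (filtrationLevel_zsmul hmono hS) fun o => (hcount o).mono fun _ hx =>
      (filtrationLevel_le_iff hmono hS).1 (le_of_eq hx)

end Filtration

theorem Set.Countable.span (R : Type*) {M : Type*} [Semiring R] [Countable R] [AddCommMonoid M]
    [Module R M] {s : Set M} (hs : s.Countable) : (Submodule.span R s : Set M).Countable := by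
  have := hs.to_subtype
  rw [← Subtype.range_coe (s := s)]
  exact countable_coe_iff.1 (inferInstanceAs (Countable (Submodule.span R (range ((↑) : s → M)))))

theorem exists_partition_linIndepSet_of_mk_le_aleph_one {V : Type*} [AddCommGroup V] [Module ℚ V]
    (hV : #V ≤ ℵ₁) :
    ∃ c : ℕ → Set V, (∀ i, LinIndepSet (c i)) ∧ Pairwise (Function.onFun Disjoint c) ∧
      ⋃ i, c i = {x | x ≠ 0} := by
  obtain ⟨e⟩ : Nonempty (V ↪ (ℵ₁ : Cardinal).ord.ToType) := by
    rwa [← le_def, mk_toType, card_ord]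
  have hO : #(ℵ₁ : Cardinal).ord.ToType = ℵ₁ := by rw [mk_toType, card_ord]
  have hIic (o : (ℵ₁ : Cardinal).ord.ToType) : (Iic o).Countable := by
    have := mk_Iic_lt o (by rw [hO, Ordinal.type_toType])
      (by rw [hO]; exact aleph0_lt_aleph_one.le)
    rw [hO, lt_aleph_one_iff] at this
    exact le_aleph0_iff_set_countable.1 this
  exact exists_partition_linIndepSet_of_filtration (S := fun o => Submodule.span ℚ (e ⁻¹' Iic o))
    (fun o p h => Submodule.span_mono (preimage_mono (Iic_subset_Iic.2 h)))
    (fun x => ⟨e x, Submodule.subset_span (mem_preimage.2 self_mem_Iic)⟩)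
    fun o => ((hIic o).preimage e.injective).span ℚ

theorem exists_monochromatic_rectangle {α β : Type u} [Uncountable α] (hαβ : #α < #β)
    (col : α → β → ℕ) :
    ∃ u v j₁ j₂ n, u ≠ v ∧ j₁ ≠ j₂ ∧
      col u j₁ = n ∧ col v j₁ = n ∧ col u j₂ = n ∧ col v j₂ = n := by
  have hpair (j : β) : ∃ p : α × α, p.1 ≠ p.2 ∧ col p.1 j = col p.2 j := by
    obtain ⟨u, v, huv, hne⟩ :=
      Function.not_injective_iff.1 (not_injective_uncountable_countable (col · j))
    exact ⟨(u, v), hne, huv⟩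
  choose p hp using hpair
  have : ¬ Function.Injective fun j => (p j, col (p j).1 j) := by
    intro h
    have hα : ℵ₀ ≤ #α := (aleph0_lt_mk_iff.2 inferInstance).le
    have hprod : #((α × α) × ℕ) = #α := by simp [mul_eq_self hα, mul_aleph0_eq hα]
    exact hαβ.not_ge ((mk_le_of_injective h).trans_eq hprod)
  obtain ⟨j₁, j₂, hj, hne⟩ := Function.not_injective_iff.1 this
  obtain ⟨hpj, hcol⟩ := Prod.mk.inj hj
  have h₁ := hp j₁
  have h₂ := hp j₂
  rw [← hpj] at h₂ hcol
  generalize p j₁ = q at *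
  exact ⟨q.1, q.2, j₁, j₂, _, h₁.1, hne, rfl, h₁.2.symm, hcol.symm, h₂.2.symm.trans hcol.symm⟩

theorem LinIndepSet.eq_zero_of_add_eq_add {G : Type*} [AddCommGroup G] {A : Set G}
    (hA : LinIndepSet A) {a b d e : G} (ha : a ∈ A) (hb : b ∈ A) (hd : d ∈ A) (he : e ∈ A)
    (hab : a ≠ b) (had : a ≠ d) (hae : a ≠ e) (hde : d ≠ e) (h : a + b = d + e) : a = 0 := by
  classical
  have hbd : b ≠ d := by rintro rfl; exact hae (add_right_cancel (h.trans (add_comm _ _)))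
  have hbe : b ≠ e := by rintro rfl; exact had (add_right_cancel h)
  have key := hA {a, b, d, e} (by simp [insert_subset_iff, ha, hb, hd, he])
    (fun x => if x = a ∨ x = b then 1 else -1) ?_ a (by simp)
  · simpa using key
  · rw [Finset.sum_insert (by simp [hab, had, hae]), Finset.sum_insert (by simp [hbd, hbe]),
      Finset.sum_insert (by simp [hde]), Finset.sum_singleton]
    simp only [true_or, or_true, had.symm, hae.symm, hbd.symm, hbe.symm, or_self, if_true,
      if_false, one_smul, neg_smul]
    rw [← add_assoc, ← neg_add, h, add_neg_cancel]

theorem LinearIndepOn.mk_le_aleph_one_of_cover {R M : Type u} [Ring R] [Nontrivial R]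
    [AddCommGroup M] [Module R M] {c : ℕ → Set M} (hc : ∀ n, LinIndepSet (c n))
    (hcover : {x | x ≠ 0} ⊆ ⋃ n, c n) {S : Set M} (hS : LinearIndepOn R id S) : #S ≤ ℵ₁ := by
  by_contra! hlt
  obtain ⟨I, hIS, hI⟩ := le_mk_iff_exists_subset.1 hlt.le
  have hJ : #I < #(S \ I : Set M) := by
    by_contra! hJ
    refine hlt.not_ge ?_
    rw [← mk_sdiff_add_mk hIS, hI]
    exact add_le_of_le aleph0_lt_aleph_one.le (hI ▸ hJ) le_rfl
  have : Uncountable I := aleph0_lt_mk_iff.1 (hI ▸ aleph0_lt_aleph_one)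
  have hadd_ne : ∀ x ∈ S, ∀ w ∈ Submodule.span R (S \ {x}), x + w ≠ 0 := by
    intro x hx w hw h
    have hxw : x = -w := eq_neg_of_add_eq_zero_left h
    have := neg_mem hw
    rw [← hxw] at this
    exact hS.notMem_span hx (by simpa using this)
  have hmem (i : I) (j : ↥(S \ I)) : (j : M) ∈ Submodule.span R (S \ {(i : M)}) :=
    Submodule.subset_span ⟨j.2.1, fun h => j.2.2 (h ▸ i.2)⟩
  have hne0 (i : I) (j : ↥(S \ I)) : (i : M) + j ≠ 0 := hadd_ne i (hIS i.2) j (hmem i j)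
  choose col hcol using fun x : {x : M // x ≠ 0} => mem_iUnion.1 (hcover x.2)
  obtain ⟨u, v, j₁, j₂, n, huv, hj, h₁, h₂, h₃, h₄⟩ :=
    exists_monochromatic_rectangle hJ fun i j => col ⟨i + j, hne0 i j⟩
  have hcross (j j' : ↥(S \ I)) : (u : M) + j ≠ v + j' := by
    intro h
    refine hadd_ne u (hIS u.2) (j - v - j') (sub_mem (sub_mem (hmem u j) ?_) (hmem u j')) ?_
    · exact Submodule.subset_span ⟨hIS v.2, fun h => huv (Subtype.ext h).symm⟩
    · rw [← sub_eq_zero.2 h]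
      abel
  refine hne0 u j₁ ((hc n).eq_zero_of_add_eq_add (b := v + j₂) (d := u + j₂) (e := v + j₁)
    (h₁ ▸ hcol _) (h₄ ▸ hcol _) (h₃ ▸ hcol _) (h₂ ▸ hcol _) (hcross j₁ j₂)
    (fun h => hj (Subtype.ext (add_left_cancel h)))
    (fun h => huv (Subtype.ext (add_right_cancel h))) (hcross j₂ j₁) (by abel))

open Cardinal in
theorem stmt17 :
    (∃ c : ℕ → Set ℝ, (∀ i, LinIndepSet (c i)) ∧
        Pairwise (Function.onFun Disjoint c) ∧
        (⋃ i, c i) = {x : ℝ | x ≠ 0}) ↔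
      Cardinal.continuum = Cardinal.aleph 1 := by
  rw [← lift_continuum.{_, 0}, lift_eq_aleph_one]
  constructor
  · rintro ⟨c, hc, -, hcover⟩
    refine le_antisymm ?_ aleph_one_le_continuum
    rw [← Real.rank_rat_real, Module.rank_def]
    exact ciSup_le' fun S => S.2.mk_le_aleph_one_of_cover hc hcover.superset
  · intro hCH
    exact exists_partition_linIndepSet_of_mk_le_aleph_one (by rw [mk_real, hCH])
end

section
/- Let κ, μ be infinite cardinals with κ⁺ < μ. Then for every coloring of the edges of the complete graph on μ vertices with κ colors, there exists a monochromatic cycle of length 4. -/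
open Cardinal in
theorem stmt18 {V : Type u} (κ μ : Cardinal.{u}) (hκ : ℵ₀ ≤ κ) (hμ : ℵ₀ ≤ μ)
    (hlt : Order.succ κ < μ) (hV : #V = μ) (χ : Sym2 V → κ.out) :
    ∃ v₁ v₂ v₃ v₄ : V, v₁ ≠ v₂ ∧ v₁ ≠ v₃ ∧ v₁ ≠ v₄ ∧ v₂ ≠ v₃ ∧ v₂ ≠ v₄ ∧ v₃ ≠ v₄ ∧
      χ s(v₁, v₂) = χ s(v₂, v₃) ∧ χ s(v₂, v₃) = χ s(v₃, v₄) ∧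
      χ s(v₃, v₄) = χ s(v₄, v₁) := by
  classical
  obtain ⟨ι⟩ : Nonempty ((Order.succ κ).out ↪ V) := by
    rw [← Cardinal.le_def, Cardinal.mk_out, hV]
    exact hlt.le
  set A := (Order.succ κ).out with hA
  have key : ∀ v : V, ∃ p : A × A, p.1 ≠ p.2 ∧ χ s(v, ι p.1) = χ s(v, ι p.2) := by
    intro v
    have h : ¬ Function.Injective (fun a : A => χ s(v, ι a)) := by
      intro hinj
      have := Cardinal.mk_le_of_injective hinj
      rw [Cardinal.mk_out, Cardinal.mk_out] at this
      exact absurd this (not_le.2 (Order.lt_succ κ))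
    rw [Function.not_injective_iff] at h
    obtain ⟨a, b, hab, hne⟩ := h
    exact ⟨(a, b), hne, hab⟩
  haveI : Infinite V := Cardinal.infinite_iff.2 (by rw [hV]; exact hμ)
  have hWcard : #(↥(Set.range ι)ᶜ) = μ := by
    have hr : #(Set.range ι) < #V := by
      rw [Cardinal.mk_range_eq _ ι.injective, Cardinal.mk_out, hV]
      exact hlt
    rw [Cardinal.mk_compl_of_infinite _ hr, hV]
  choose p hp hχ using key
  set G : ↥(Set.range ι)ᶜ → A × A × κ.out :=
    fun v => ((p v.1).1, (p v.1).2, χ s(v.1, ι (p v.1).1)) with hG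
  have hsucc : ℵ₀ ≤ Order.succ κ := hκ.trans (Order.le_succ κ)
  have hcard : #(A × A × κ.out) < #(↥(Set.range ι)ᶜ) := by
    rw [hWcard]
    have : #(A × A × κ.out) = Order.succ κ * (Order.succ κ * κ) := by
      simp [Cardinal.mk_prod, Cardinal.lift_id, Cardinal.mk_out, hA]
    rw [this, Cardinal.mul_eq_max hsucc hκ, max_eq_left (Order.le_succ κ),
      Cardinal.mul_eq_self hsucc]
    exact hlt
  have hGni : ¬ Function.Injective G := by
    intro hinj
    exact absurd (Cardinal.mk_le_of_injective hinj) (not_le.2 hcard)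
  rw [Function.not_injective_iff] at hGni
  obtain ⟨v, w, hvw, hne⟩ := hGni
  have hpvw : p v.1 = p w.1 := by
    have h1 := congrArg (fun q => q.1) hvw
    have h2 := congrArg (fun q => q.2.1) hvw
    exact Prod.ext h1 h2
  have hcol : χ s(v.1, ι (p v.1).1) = χ s(w.1, ι (p w.1).1) :=
    congrArg (fun q => q.2.2) hvw
  rw [← hpvw] at hcol
  have hχw : χ s(w.1, ι (p v.1).1) = χ s(w.1, ι (p v.1).2) := by
    rw [hpvw]; exact hχ w.1
  set a := (p v.1).1 with ha
  set b := (p v.1).2 with hb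
  have hwa : χ s(w.1, ι a) = χ s(v.1, ι a) := hcol.symm
  have hwb : χ s(w.1, ι b) = χ s(w.1, ι a) := hχw.symm
  have hvb : χ s(v.1, ι b) = χ s(v.1, ι a) := (hχ v.1).symm
  refine ⟨v.1, ι a, w.1, ι b, ?_, ?_, ?_, ?_, ?_, ?_, ?_, ?_, ?_⟩
  · exact fun h => v.2 ⟨a, h.symm⟩
  · exact fun h => hne (Subtype.ext h)
  · exact fun h => v.2 ⟨b, h.symm⟩
  · exact fun h => w.2 ⟨a, h⟩
  · exact fun h => hp v.1 (ι.injective h)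
  · exact fun h => w.2 ⟨b, h.symm⟩
  · rw [Sym2.eq_swap (a := ι a) (b := w.1), hwa]
  · rw [Sym2.eq_swap (a := ι a) (b := w.1), hwa, hwb, hwa]
  · rw [Sym2.eq_swap (a := ι b) (b := v.1), hwb, hwa, hvb]
end
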